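/- Let r₁,…,rₙ be independent Rademacher random variables and (a_{ij})_{1≤i<j≤n} real numbers. Then P(Σ_{1≤i<j≤n} rᵢrⱼ a_{ij} ≥ 0) ≥ (2√3 − 3)/15 > 3/100, and if not all a_{ij} are zero then P(Σ_{1≤i<j≤n} rᵢrⱼ a_{ij} > 0) ≥ (2√3 − 3)/15. -/

import Mathlib

/-!
For a centred random variable `ξ`, the quartic `2u + 3u² - u⁴ = u (u + 1)² (2 - u)` is `≤ 0` for
`u ≤ 0` and at most `(9 + 6√3)/4` everywhere. Evaluating it at a suitable multiple of `ξ` and taking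
expectations gives `P(ξ > 0) ≥ (2√3 - 3) (Eξ²)² / Eξ⁴`.

The signs `(rᵢ)` are uniformly distributed on `{±1}ⁿ`, and there the moments of
`χ = ∑_{i<j} aᵢⱼ rᵢ rⱼ` are computed by induction on `n`: splitting off the first sign writes
`χ = r₀ N + Q` with `N` linear and `Q` a chaos in the remaining signs, so that
`Eχ⁴ = EQ⁴ + 6 E Q²N² + EN⁴`. The bounds `EN⁴ ≤ 3 (EN²)²` and `E Q²L² ≤ 5 EQ² EL²`, proved by the
same induction, then give `Eχ⁴ ≤ 15 (Eχ²)²`.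
-/

open MeasureTheory ProbabilityTheory Real

noncomputable section

open Finset Fin Matrix
open scoped BigOperators

-- The bound is the maximum, attained at `u = (1 + √3) / 2`.
lemma quartic_le (u : ℝ) : 2 * u + 3 * u ^ 2 - u ^ 4 ≤ (9 + 6 * √3) / 4 := by
  have h3 : √3 ^ 2 = 3 := sq_sqrt (by norm_num)
  have h1 : 1 ≤ √3 := by rw [show (1 : ℝ) = √1 by simp]; exact sqrt_le_sqrt (by norm_num)
  have key : (9 + 6 * √3) / 4 - (2 * u + 3 * u ^ 2 - u ^ 4) =
      (u ^ 2 - (2 + √3) / 2) ^ 2 + (√3 - 1) * (u - (1 + √3) / 2) ^ 2 := by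
    linear_combination (u - (√3 + 2) / 4) * h3
  nlinarith [mul_nonneg (sub_nonneg.2 h1) (sq_nonneg (u - (1 + √3) / 2)),
    sq_nonneg (u ^ 2 - (2 + √3) / 2)]

lemma quartic_nonpos_of_nonpos {u : ℝ} (hu : u ≤ 0) : 2 * u + 3 * u ^ 2 - u ^ 4 ≤ 0 := by
  have h : 2 * u + 3 * u ^ 2 - u ^ 4 = u * ((u + 1) ^ 2 * (2 - u)) := by ring
  rw [h]
  exact mul_nonpos_of_nonpos_of_nonneg hu (mul_nonneg (sq_nonneg _) (by linarith))

theorem div_le_measureReal_pos_of_integral_pow_four_le {Ω : Type*} [MeasurableSpace Ω]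
    {μ : Measure Ω} [IsProbabilityMeasure μ] {ξ : Ω → ℝ} (hξ : Measurable ξ)
    (h4 : Integrable (fun ω => ξ ω ^ 4) μ) (hmean : ∫ ω, ξ ω ∂μ = 0)
    (hvar : 0 < ∫ ω, ξ ω ^ 2 ∂μ) {K : ℝ} (hK : ∫ ω, ξ ω ^ 4 ∂μ ≤ K * (∫ ω, ξ ω ^ 2 ∂μ) ^ 2) :
    (2 * √3 - 3) / K ≤ μ.real {ω | 0 < ξ ω} := by
  have h3 : √3 ^ 2 = 3 := sq_sqrt (by norm_num)
  have hc : 0 ≤ 2 * √3 - 3 := by nlinarith [sqrt_nonneg 3]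
  rcases le_or_gt K 0 with hK0 | hK0
  · exact (div_nonpos_of_nonneg_of_nonpos hc hK0).trans measureReal_nonneg
  have hdom : Integrable (fun ω => 1 + ξ ω ^ 4) μ := (integrable_const 1).add h4
  have h1 : Integrable ξ μ := hdom.mono' hξ.aestronglyMeasurable <| ae_of_all _ fun ω => by
    rw [norm_eq_abs]
    nlinarith [sq_nonneg (ξ ω ^ 2 - 1 / 2), sq_nonneg (|ξ ω| - 1 / 2), sq_abs (ξ ω)]
  have h2 : Integrable (fun ω => ξ ω ^ 2) μ :=
    hdom.mono' (hξ.pow_const 2).aestronglyMeasurable <| ae_of_all _ fun ω => by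
      rw [norm_eq_abs, abs_of_nonneg (sq_nonneg _)]; nlinarith [sq_nonneg (ξ ω ^ 2 - 1)]
  set s := ∫ ω, ξ ω ^ 2 ∂μ
  set m := ∫ ω, ξ ω ^ 4 ∂μ
  set S := {ω | 0 < ξ ω}
  have hS : MeasurableSet S := measurableSet_lt measurable_const hξ
  -- `t ^ 2 = 3 / (2 K s)` maximises `3 t² s - t⁴ K s²`, which bounds `E (quartic (t ξ))` below.
  set t := √(3 / (2 * K * s))
  have ht : 0 < t := sqrt_pos.2 (by positivity)
  have ht2 : t ^ 2 = 3 / (2 * K * s) := sq_sqrt (by positivity)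
  have hpt : ∀ ω, 2 * (t * ξ ω) + 3 * (t * ξ ω) ^ 2 - (t * ξ ω) ^ 4 ≤
      S.indicator (fun _ => (9 + 6 * √3) / 4) ω := by
    intro ω
    by_cases hω : 0 < ξ ω
    · rw [Set.indicator_of_mem (show ω ∈ S from hω)]; exact quartic_le _
    · rw [Set.indicator_of_notMem (show ω ∉ S from hω)]
      exact quartic_nonpos_of_nonpos (mul_nonpos_of_nonneg_of_nonpos ht.le (not_lt.1 hω))
  have hI1 : Integrable (fun ω => 2 * t * ξ ω) μ := h1.const_mul _
  have hI2 : Integrable (fun ω => 3 * t ^ 2 * ξ ω ^ 2) μ := h2.const_mul _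
  have hI4 : Integrable (fun ω => t ^ 4 * ξ ω ^ 4) μ := h4.const_mul _
  have hE : ∫ ω, (2 * t * ξ ω + 3 * t ^ 2 * ξ ω ^ 2 - t ^ 4 * ξ ω ^ 4) ∂μ =
      3 * t ^ 2 * s - t ^ 4 * m := by
    rw [integral_sub (f := fun ω => 2 * t * ξ ω + 3 * t ^ 2 * ξ ω ^ 2) (hI1.add hI2) hI4,
      integral_add hI1 hI2, integral_const_mul, integral_const_mul, integral_const_mul, hmean]
    ring
  have hint : 3 * t ^ 2 * s - t ^ 4 * m ≤ (9 + 6 * √3) / 4 * μ.real S := by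
    have hind := integral_indicator_const ((9 + 6 * √3) / 4) hS (μ := μ)
    rw [smul_eq_mul, mul_comm (μ.real S)] at hind
    rw [← hE, ← hind]
    refine integral_mono ((hI1.add hI2).sub hI4) ((integrable_const _).indicator hS) fun ω =>
      (le_of_eq (by ring)).trans (hpt ω)
  have hlow : 9 / 4 ≤ K * (3 * t ^ 2 * s - t ^ 4 * m) := by
    have hm : t ^ 4 * m ≤ t ^ 4 * (K * s ^ 2) := by gcongr
    have h4t : t ^ 4 = (t ^ 2) ^ 2 := by ring
    rw [h4t, ht2] at hm ⊢
    field_simp at hm ⊢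
    nlinarith
  have hM : 0 < (9 + 6 * √3) / 4 := by positivity
  have hprod : (9 + 6 * √3) / 4 * (2 * √3 - 3) = 9 / 4 := by linear_combination 3 * h3
  rw [div_le_iff₀ hK0]
  refine le_of_mul_le_mul_left ?_ hM
  rw [hprod]
  nlinarith [mul_le_mul_of_nonneg_left hint hK0.le]

def signCube (n : ℕ) : Finset (Fin n → ℝ) := Fintype.piFinset fun _ => {1, -1}

lemma signCube_nonempty (n : ℕ) : (signCube n).Nonempty := ⟨fun _ => 1, by simp [signCube]⟩

lemma card_signCube (n : ℕ) : #(signCube n) = 2 ^ n := by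
  simp [signCube, Fintype.card_piFinset, card_pair (show (1 : ℝ) ≠ -1 by norm_num)]

lemma expect_one_neg_one (G : ℝ → ℝ) : 𝔼 t ∈ ({1, -1} : Finset ℝ), G t = (G 1 + G (-1)) / 2 := by
  have h : (1 : ℝ) ≠ -1 := by norm_num
  rw [expect_eq_sum_div_card, sum_pair h, card_pair h]
  norm_num

lemma expect_signCube_succ {n : ℕ} (F : (Fin (n + 1) → ℝ) → ℝ) :
    𝔼 x ∈ signCube (n + 1), F x =
      𝔼 x ∈ signCube n, (F (cons 1 x) + F (cons (-1) x)) / 2 := by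
  calc 𝔼 x ∈ signCube (n + 1), F x = 𝔼 p ∈ {1, -1} ×ˢ signCube n, F (cons p.1 p.2) :=
        expect_nbij' (fun x => (x 0, tail x)) (fun p => cons p.1 p.2)
          (by simp only [signCube, mem_product, Fintype.mem_piFinset]
              exact fun x hx => ⟨hx 0, fun i => hx i.succ⟩)
          (by simp only [signCube, mem_product, Fintype.mem_piFinset]
              exact fun p hp i => Fin.cases hp.1 hp.2 i)
          (by simp) (by simp) (by simp)
    _ = 𝔼 x ∈ signCube n, 𝔼 t ∈ ({1, -1} : Finset ℝ), F (cons t x) := by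
        rw [expect_product' _ _ fun t x => F (cons t x), expect_comm]
    _ = _ := by simp only [expect_one_neg_one]

lemma sq_expect_mul_le_of_expect_eq_zero {ι : Type*} {s : Finset ι} (hs : s.Nonempty)
    {f g : ι → ℝ} (hg : 𝔼 i ∈ s, g i = 0) :
    (𝔼 i ∈ s, g i * f i) ^ 2 ≤ (𝔼 i ∈ s, g i ^ 2) * (𝔼 i ∈ s, f i ^ 2 - (𝔼 i ∈ s, f i) ^ 2) := by
  set c := 𝔼 i ∈ s, f i
  have hgf : 𝔼 i ∈ s, g i * (f i - c) = 𝔼 i ∈ s, g i * f i := by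
    simp only [mul_sub, expect_sub_distrib, ← expect_mul, hg, zero_mul, sub_zero]
  have hvar : 𝔼 i ∈ s, (f i - c) ^ 2 = 𝔼 i ∈ s, f i ^ 2 - c ^ 2 := by
    simp only [sub_sq, expect_add_distrib, expect_sub_distrib, ← expect_mul, ← mul_expect,
      expect_const hs]
    ring
  rw [← hgf, ← hvar]
  exact expect_mul_sq_le_sq_mul_sq s g fun i => f i - c

variable {n : ℕ}

def quadForm (a : Fin n → Fin n → ℝ) (x : Fin n → ℝ) : ℝ :=
  ∑ i, ∑ j, if i < j then x i * x j * a i j else 0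

lemma sum_sum_ite_lt_succ {M : Type*} [AddCommMonoid M] (g : Fin (n + 1) → Fin (n + 1) → M) :
    (∑ i, ∑ j, if i < j then g i j else 0) =
      ∑ j : Fin n, g 0 j.succ + ∑ i : Fin n, ∑ j : Fin n, if i < j then g i.succ j.succ else 0 := by
  simp [Fin.sum_univ_succ, Fin.succ_pos]

lemma dotProduct_fin_cons (b : Fin (n + 1) → ℝ) (t : ℝ) (x : Fin n → ℝ) :
    b ⬝ᵥ cons t x = b 0 * t + tail b ⬝ᵥ x := by
  simp [dotProduct, Fin.sum_univ_succ, tail]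

lemma quadForm_eq_zero_of_forall {a : Fin n → Fin n → ℝ} (ha : ∀ i j, i < j → a i j = 0)
    (x : Fin n → ℝ) : quadForm a x = 0 :=
  sum_eq_zero fun i _ => sum_eq_zero fun j _ => by
    split_ifs with hij
    · rw [ha i j hij, mul_zero]
    · rfl

lemma quadForm_cons (a : Fin (n + 1) → Fin (n + 1) → ℝ) (t : ℝ) (x : Fin n → ℝ) :
    quadForm a (cons t x) = t * (tail (a 0) ⬝ᵥ x) + quadForm (fun i j => a i.succ j.succ) x := by
  rw [quadForm, sum_sum_ite_lt_succ, quadForm, dotProduct, mul_sum]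
  congr 1
  exact sum_congr rfl fun j _ => by simp only [cons_zero, cons_succ, tail]; ring

lemma expect_quadForm (a : Fin n → Fin n → ℝ) : 𝔼 x ∈ signCube n, quadForm a x = 0 := by
  induction n with
  | zero => simp [quadForm]
  | succ n ih =>
    rw [expect_signCube_succ, ← ih fun i j => a i.succ j.succ]
    exact expect_congr rfl fun x _ => by simp only [quadForm_cons]; ring

lemma expect_dotProduct_sq (b : Fin n → ℝ) : 𝔼 x ∈ signCube n, (b ⬝ᵥ x) ^ 2 = ∑ i, b i ^ 2 := by
  induction n with
  | zero => simp
  | succ n ih =>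
    calc 𝔼 x ∈ signCube (n + 1), (b ⬝ᵥ x) ^ 2
        = 𝔼 x ∈ signCube n, ((tail b ⬝ᵥ x) ^ 2 + b 0 ^ 2) := by
          rw [expect_signCube_succ]
          exact expect_congr rfl fun x _ => by simp only [dotProduct_fin_cons]; ring
      _ = ∑ i, b i ^ 2 := by
          rw [expect_add_distrib, ih, expect_const (signCube_nonempty n), Fin.sum_univ_succ]
          simp only [tail]; ring

lemma expect_quadForm_sq (a : Fin n → Fin n → ℝ) :
    𝔼 x ∈ signCube n, quadForm a x ^ 2 = ∑ i, ∑ j, if i < j then a i j ^ 2 else 0 := by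
  induction n with
  | zero => simp [quadForm]
  | succ n ih =>
    calc 𝔼 x ∈ signCube (n + 1), quadForm a x ^ 2
        = 𝔼 x ∈ signCube n,
            (quadForm (fun i j => a i.succ j.succ) x ^ 2 + (tail (a 0) ⬝ᵥ x) ^ 2) := by
          rw [expect_signCube_succ]
          exact expect_congr rfl fun x _ => by simp only [quadForm_cons]; ring
      _ = _ := by
          rw [expect_add_distrib, ih, expect_dotProduct_sq, sum_sum_ite_lt_succ, add_comm]
          rfl

lemma expect_sq_mul_sq_dotProduct_le (b c : Fin n → ℝ) :
    𝔼 x ∈ signCube n, (b ⬝ᵥ x) ^ 2 * (c ⬝ᵥ x) ^ 2 ≤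
      2 * (𝔼 x ∈ signCube n, (b ⬝ᵥ x) ^ 2) * (𝔼 x ∈ signCube n, (c ⬝ᵥ x) ^ 2) +
        (𝔼 x ∈ signCube n, (b ⬝ᵥ x) * (c ⬝ᵥ x)) ^ 2 := by
  induction n with
  | zero => simp
  | succ n ih =>
    have hne := signCube_nonempty n
    set L := fun x => tail b ⬝ᵥ x
    set M := fun x => tail c ⬝ᵥ x
    set l := 𝔼 x ∈ signCube n, L x ^ 2
    set m := 𝔼 x ∈ signCube n, M x ^ 2
    set p := 𝔼 x ∈ signCube n, L x * M x
    have hLM : 𝔼 x ∈ signCube (n + 1), (b ⬝ᵥ x) ^ 2 * (c ⬝ᵥ x) ^ 2 =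
        𝔼 x ∈ signCube n, L x ^ 2 * M x ^ 2 + b 0 ^ 2 * m + c 0 ^ 2 * l +
          4 * (b 0 * c 0) * p + b 0 ^ 2 * c 0 ^ 2 := by
      calc _ = 𝔼 x ∈ signCube n, (L x ^ 2 * M x ^ 2 + b 0 ^ 2 * M x ^ 2 + c 0 ^ 2 * L x ^ 2 +
            4 * (b 0 * c 0) * (L x * M x) + b 0 ^ 2 * c 0 ^ 2) := by
            rw [expect_signCube_succ]
            exact expect_congr rfl fun x _ => by simp only [dotProduct_fin_cons, L, M]; ring
        _ = _ := by simp only [expect_add_distrib, ← mul_expect, expect_const hne]; rfl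
    have hL : 𝔼 x ∈ signCube (n + 1), (b ⬝ᵥ x) ^ 2 = l + b 0 ^ 2 := by
      rw [expect_signCube_succ, ← expect_const hne (b 0 ^ 2), ← expect_add_distrib]
      exact expect_congr rfl fun x _ => by simp only [dotProduct_fin_cons, L]; ring
    have hM : 𝔼 x ∈ signCube (n + 1), (c ⬝ᵥ x) ^ 2 = m + c 0 ^ 2 := by
      rw [expect_signCube_succ, ← expect_const hne (c 0 ^ 2), ← expect_add_distrib]
      exact expect_congr rfl fun x _ => by simp only [dotProduct_fin_cons, M]; ring
    have hcross : 𝔼 x ∈ signCube (n + 1), (b ⬝ᵥ x) * (c ⬝ᵥ x) = p + b 0 * c 0 := by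
      rw [expect_signCube_succ, ← expect_const hne (b 0 * c 0), ← expect_add_distrib]
      exact expect_congr rfl fun x _ => by simp only [dotProduct_fin_cons, L, M]; ring
    have hl : 0 ≤ l := expect_nonneg fun x _ => sq_nonneg (L x)
    have hm : 0 ≤ m := expect_nonneg fun x _ => sq_nonneg (M x)
    have hcs : p ^ 2 ≤ l * m := expect_mul_sq_le_sq_mul_sq (signCube n) L M
    have hamgm : 2 * (b 0 * c 0 * p) ≤ b 0 ^ 2 * m + c 0 ^ 2 * l :=
      two_mul_le_add_of_sq_le_mul (by positivity) (by positivity) <| by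
        calc (b 0 * c 0 * p) ^ 2 = b 0 ^ 2 * c 0 ^ 2 * p ^ 2 := by ring
          _ ≤ b 0 ^ 2 * c 0 ^ 2 * (l * m) := by gcongr
          _ = b 0 ^ 2 * m * (c 0 ^ 2 * l) := by ring
    rw [hLM, hL, hM, hcross]
    nlinarith [ih (tail b) (tail c), sq_nonneg (b 0 * c 0)]

lemma expect_sq_mul_sq_quadForm_dotProduct_le (a : Fin n → Fin n → ℝ) (b : Fin n → ℝ) :
    𝔼 x ∈ signCube n, quadForm a x ^ 2 * (b ⬝ᵥ x) ^ 2 ≤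
      5 * (𝔼 x ∈ signCube n, quadForm a x ^ 2) * (𝔼 x ∈ signCube n, (b ⬝ᵥ x) ^ 2) := by
  induction n with
  | zero => simp [quadForm]
  | succ n ih =>
    have hne := signCube_nonempty n
    set Q := quadForm fun i j => a i.succ j.succ
    set N := fun x => tail (a 0) ⬝ᵥ x
    set L := fun x => tail b ⬝ᵥ x
    set q := 𝔼 x ∈ signCube n, Q x ^ 2
    set ν := 𝔼 x ∈ signCube n, N x ^ 2
    set l := 𝔼 x ∈ signCube n, L x ^ 2
    set p := 𝔼 x ∈ signCube n, N x * L x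
    set w := 𝔼 x ∈ signCube n, Q x * (N x * L x)
    have hQL : 𝔼 x ∈ signCube (n + 1), quadForm a x ^ 2 * (b ⬝ᵥ x) ^ 2 =
        𝔼 x ∈ signCube n, Q x ^ 2 * L x ^ 2 + b 0 ^ 2 * q +
          𝔼 x ∈ signCube n, N x ^ 2 * L x ^ 2 + b 0 ^ 2 * ν + 4 * b 0 * w := by
      calc _ = 𝔼 x ∈ signCube n, (Q x ^ 2 * L x ^ 2 + b 0 ^ 2 * Q x ^ 2 + N x ^ 2 * L x ^ 2 +
            b 0 ^ 2 * N x ^ 2 + 4 * b 0 * (Q x * (N x * L x))) := by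
            rw [expect_signCube_succ]
            exact expect_congr rfl fun x _ => by
              simp only [quadForm_cons, dotProduct_fin_cons, Q, N, L]; ring
        _ = _ := by simp only [expect_add_distrib, ← mul_expect]; rfl
    have hQ : 𝔼 x ∈ signCube (n + 1), quadForm a x ^ 2 = q + ν := by
      rw [expect_signCube_succ, ← expect_add_distrib]
      exact expect_congr rfl fun x _ => by simp only [quadForm_cons, Q, N]; ring
    have hL : 𝔼 x ∈ signCube (n + 1), (b ⬝ᵥ x) ^ 2 = l + b 0 ^ 2 := by
      rw [expect_signCube_succ, ← expect_const hne (b 0 ^ 2), ← expect_add_distrib]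
      exact expect_congr rfl fun x _ => by simp only [dotProduct_fin_cons, L]; ring
    have hq : 0 ≤ q := expect_nonneg fun x _ => sq_nonneg (Q x)
    have hν : 0 ≤ ν := expect_nonneg fun x _ => sq_nonneg (N x)
    have hl : 0 ≤ l := expect_nonneg fun x _ => sq_nonneg (L x)
    have hNL : 𝔼 x ∈ signCube n, N x ^ 2 * L x ^ 2 ≤ 2 * ν * l + p ^ 2 :=
      expect_sq_mul_sq_dotProduct_le (tail (a 0)) (tail b)
    have hcs : p ^ 2 ≤ ν * l := expect_mul_sq_le_sq_mul_sq (signCube n) N L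
    -- As `E Q = 0`, only the variance of `N L` enters, and it is at most `2 EN² EL²`; the cruder
    -- `E N²L² ≤ 3 EN² EL²` would not close the induction.
    have hw : w ^ 2 ≤ q * (2 * ν * l) := by
      have h := sq_expect_mul_le_of_expect_eq_zero hne (g := Q) (f := fun x => N x * L x)
        (expect_quadForm _)
      simp only [mul_pow] at h
      exact h.trans (mul_le_mul_of_nonneg_left (by linarith) hq)
    have hamgm : 2 * (2 * b 0 * w) ≤ 4 * b 0 ^ 2 * q + 2 * ν * l :=
      two_mul_le_add_of_sq_le_mul (by positivity) (by positivity) <| by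
        calc (2 * b 0 * w) ^ 2 = 4 * b 0 ^ 2 * w ^ 2 := by ring
          _ ≤ 4 * b 0 ^ 2 * (q * (2 * ν * l)) := by gcongr
          _ = 4 * b 0 ^ 2 * q * (2 * ν * l) := by ring
    rw [hQL, hQ, hL]
    nlinarith [ih (fun i j => a i.succ j.succ) (tail b), mul_nonneg hq (sq_nonneg (b 0)),
      mul_nonneg hν (sq_nonneg (b 0))]

theorem expect_quadForm_pow_four_le (a : Fin n → Fin n → ℝ) :
    𝔼 x ∈ signCube n, quadForm a x ^ 4 ≤ 15 * (𝔼 x ∈ signCube n, quadForm a x ^ 2) ^ 2 := by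
  induction n with
  | zero => simp [quadForm]
  | succ n ih =>
    set Q := quadForm fun i j => a i.succ j.succ
    set N := fun x => tail (a 0) ⬝ᵥ x
    set q := 𝔼 x ∈ signCube n, Q x ^ 2
    set ν := 𝔼 x ∈ signCube n, N x ^ 2
    have hQ4 : 𝔼 x ∈ signCube (n + 1), quadForm a x ^ 4 =
        𝔼 x ∈ signCube n, Q x ^ 4 + 6 * 𝔼 x ∈ signCube n, Q x ^ 2 * N x ^ 2 +
          𝔼 x ∈ signCube n, N x ^ 2 * N x ^ 2 := by
      rw [mul_expect, ← expect_add_distrib, ← expect_add_distrib, expect_signCube_succ]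
      exact expect_congr rfl fun x _ => by simp only [quadForm_cons, Q, N]; ring
    have hQ : 𝔼 x ∈ signCube (n + 1), quadForm a x ^ 2 = q + ν := by
      rw [expect_signCube_succ, ← expect_add_distrib]
      exact expect_congr rfl fun x _ => by simp only [quadForm_cons, Q, N]; ring
    have hN4 : 𝔼 x ∈ signCube n, N x ^ 2 * N x ^ 2 ≤ 3 * ν ^ 2 := by
      calc _ ≤ 2 * ν * ν + (𝔼 x ∈ signCube n, N x * N x) ^ 2 :=
            expect_sq_mul_sq_dotProduct_le (tail (a 0)) (tail (a 0))
        _ = 3 * ν ^ 2 := by simp only [← sq]; ring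
    have hq : 0 ≤ q := expect_nonneg fun x _ => sq_nonneg (Q x)
    have hν : 0 ≤ ν := expect_nonneg fun x _ => sq_nonneg (N x)
    rw [hQ4, hQ]
    nlinarith [ih (fun i j => a i.succ j.succ),
      expect_sq_mul_sq_quadForm_dotProduct_le (fun i j => a i.succ j.succ) (tail (a 0))]

section Transfer

variable {Ω : Type*} {r : Fin n → Ω → ℝ}

lemma measure_signs_eq [MeasureSpace Ω] [IsProbabilityMeasure (ℙ : Measure Ω)]
    (hmeas : ∀ i, Measurable (r i)) (hindep : iIndepFun r ℙ) (hval : ∀ i ω, r i ω = 1 ∨ r i ω = -1)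
    (hrad : ∀ i, ℙ {ω | r i ω = 1} = 1 / 2) {x : Fin n → ℝ} (hx : x ∈ signCube n) :
    ℙ {ω | (fun i => r i ω) = x} = (2 ^ n)⁻¹ := by
  have hcoord : ∀ i, ℙ (r i ⁻¹' {x i}) = 2⁻¹ := by
    intro i
    have hxi : x i = 1 ∨ x i = -1 := by simpa using Fintype.mem_piFinset.1 hx i
    rcases hxi with hxi | hxi
    · rw [hxi, ← one_div]
      exact hrad i
    · have hcompl : r i ⁻¹' {-1} = {ω | r i ω = 1}ᶜ := by
        ext ω
        rcases hval i ω with h | h <;> simp [h] <;> norm_num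
      rw [hxi, hcompl, prob_compl_eq_one_sub (measurableSet_eq_fun (hmeas i) measurable_const),
        hrad i, one_div, ENNReal.one_sub_inv_two]
  have hset : {ω | (fun i => r i ω) = x} = ⋂ i ∈ (univ : Finset (Fin n)), r i ⁻¹' {x i} := by
    ext ω; simp [funext_iff]
  rw [hset, hindep.measure_inter_preimage_eq_mul _ fun i _ => measurableSet_singleton _]
  simp [hcoord, ENNReal.inv_pow]

lemma comp_eq_sum_indicator (hval : ∀ i ω, r i ω = 1 ∨ r i ω = -1) (F : (Fin n → ℝ) → ℝ) :
    (fun ω => F fun i => r i ω) =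
      fun ω => ∑ x ∈ signCube n, F x * {ω | (fun i => r i ω) = x}.indicator 1 ω := by
  funext ω
  have hmem : (fun i => r i ω) ∈ signCube n :=
    Fintype.mem_piFinset.2 fun i => by simpa using hval i ω
  rw [sum_eq_single_of_mem _ hmem fun x _ hx => by simp [Ne.symm hx]]
  simp

lemma measurableSet_eq_signs [MeasurableSpace Ω] (hmeas : ∀ i, Measurable (r i)) (x : Fin n → ℝ) :
    MeasurableSet {ω | (fun i => r i ω) = x} :=
  measurable_pi_lambda _ hmeas (measurableSet_singleton x)

lemma measurable_comp_signs [MeasurableSpace Ω] (hmeas : ∀ i, Measurable (r i))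
    (hval : ∀ i ω, r i ω = 1 ∨ r i ω = -1) (F : (Fin n → ℝ) → ℝ) :
    Measurable fun ω => F fun i => r i ω := by
  rw [comp_eq_sum_indicator hval]
  exact Finset.measurable_sum _ fun x _ =>
    (measurable_const.indicator (measurableSet_eq_signs hmeas x)).const_mul _

lemma integrable_comp_signs [MeasurableSpace Ω] {μ : Measure Ω} [IsFiniteMeasure μ]
    (hmeas : ∀ i, Measurable (r i)) (hval : ∀ i ω, r i ω = 1 ∨ r i ω = -1)
    (F : (Fin n → ℝ) → ℝ) : Integrable (fun ω => F fun i => r i ω) μ := by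
  rw [comp_eq_sum_indicator hval]
  exact integrable_finsetSum _ fun x _ =>
    ((integrable_const 1).indicator (measurableSet_eq_signs hmeas x)).const_mul _

lemma integral_comp_signs_eq_expect [MeasureSpace Ω] [IsProbabilityMeasure (ℙ : Measure Ω)]
    (hmeas : ∀ i, Measurable (r i)) (hindep : iIndepFun r ℙ)
    (hval : ∀ i ω, r i ω = 1 ∨ r i ω = -1) (hrad : ∀ i, ℙ {ω | r i ω = 1} = 1 / 2)
    (F : (Fin n → ℝ) → ℝ) :
    ∫ ω, F (fun i => r i ω) = 𝔼 x ∈ signCube n, F x := by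
  rw [comp_eq_sum_indicator hval, integral_finsetSum _ fun x _ =>
      ((integrable_const 1).indicator (measurableSet_eq_signs hmeas x)).const_mul _,
    expect_eq_sum_div_card, card_signCube, sum_div]
  refine sum_congr rfl fun x hx => ?_
  rw [integral_const_mul, integral_indicator_one (measurableSet_eq_signs hmeas x), measureReal_def,
    measure_signs_eq hmeas hindep hval hrad hx]
  simp [div_eq_mul_inv]

theorem le_measure_quadForm_pos [MeasureSpace Ω] [IsProbabilityMeasure (ℙ : Measure Ω)]
    (hmeas : ∀ i, Measurable (r i)) (hindep : iIndepFun r ℙ)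
    (hval : ∀ i ω, r i ω = 1 ∨ r i ω = -1) (hrad : ∀ i, ℙ {ω | r i ω = 1} = 1 / 2)
    {a : Fin n → Fin n → ℝ} (ha : ∃ i j, i < j ∧ a i j ≠ 0) :
    ENNReal.ofReal ((2 * √3 - 3) / 15) ≤ ℙ {ω | 0 < quadForm a fun i => r i ω} := by
  have hmom : ∀ k : ℕ, ∫ ω, quadForm a (fun i => r i ω) ^ k = 𝔼 x ∈ signCube n, quadForm a x ^ k :=
    fun k => integral_comp_signs_eq_expect hmeas hindep hval hrad fun x => quadForm a x ^ k
  have hvar : 0 < 𝔼 x ∈ signCube n, quadForm a x ^ 2 := by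
    obtain ⟨i, j, hij, hne⟩ := ha
    rw [expect_quadForm_sq]
    refine sum_pos' (fun i _ => sum_nonneg fun j _ => ?_) ⟨i, mem_univ i, ?_⟩
    · split_ifs <;> positivity
    · exact sum_pos' (fun j _ => by split_ifs <;> positivity)
        ⟨j, mem_univ j, by simpa [hij] using lt_of_le_of_ne (sq_nonneg _) (pow_ne_zero 2 hne).symm⟩
  rw [← ENNReal.ofReal_toReal (measure_ne_top ℙ _)]
  refine ENNReal.ofReal_le_ofReal (div_le_measureReal_pos_of_integral_pow_four_le
    (measurable_comp_signs hmeas hval _) (integrable_comp_signs hmeas hval fun x => quadForm a x ^ 4)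
    ?_ ?_ ?_)
  · rw [integral_comp_signs_eq_expect hmeas hindep hval hrad (quadForm a), expect_quadForm]
  · rwa [hmom]
  · rw [hmom, hmom]
    exact expect_quadForm_pow_four_le a

end Transfer

end

theorem stmt15 {Ω : Type*} [MeasureSpace Ω] [IsProbabilityMeasure (ℙ : Measure Ω)]
    {n : ℕ} (r : Fin n → Ω → ℝ) (hmeas : ∀ i, Measurable (r i))
    (hindep : iIndepFun r ℙ)
    (hval : ∀ i ω, r i ω = 1 ∨ r i ω = -1)
    (hrad : ∀ i, ℙ {ω | r i ω = 1} = 1 / 2)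
    (a : Fin n → Fin n → ℝ) :
    ENNReal.ofReal ((2 * Real.sqrt 3 - 3) / 15) ≤
        ℙ {ω | 0 ≤ ∑ i, ∑ j, if i < j then r i ω * r j ω * a i j else 0} ∧
    (3 / 100 : ℝ) < (2 * Real.sqrt 3 - 3) / 15 ∧
    ((∃ i j, i < j ∧ a i j ≠ 0) →
      ENNReal.ofReal ((2 * Real.sqrt 3 - 3) / 15) ≤
        ℙ {ω | 0 < ∑ i, ∑ j, if i < j then r i ω * r j ω * a i j else 0}) := by
  have hsqrt3 : (1.725 : ℝ) < √3 := Real.lt_sqrt (by norm_num) |>.2 (by norm_num)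
  have hsqrt3' : √3 < 2 := (Real.sqrt_lt' (by norm_num)).2 (by norm_num)
  refine ⟨?_, by linarith, le_measure_quadForm_pos hmeas hindep hval hrad⟩
  by_cases ha : ∃ i j, i < j ∧ a i j ≠ 0
  · exact (le_measure_quadForm_pos hmeas hindep hval hrad ha).trans
      (measure_mono (Set.ofPred_subset_ofPred.2 fun _ h => h.le))
  · push Not at ha
    calc ENNReal.ofReal ((2 * √3 - 3) / 15) ≤ ℙ Set.univ := by
          rw [measure_univ]
          exact ENNReal.ofReal_le_one.2 (by linarith)
      _ ≤ _ := measure_mono fun ω _ => (quadForm_eq_zero_of_forall ha _).ge
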